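/- Let g be convex and L_{∇g}-smooth on a real inner product space and F(b) = g(x̂(b)) + r(b) the exact upper-level objective. Suppose at iteration k, x̃ₖ approximates x̂(bₖ) with ‖x̃ₖ − x̂(bₖ)‖ ≤ ε̄ and x̃ₖ₊₁ approximates x̂(bₖ₊₁) with ‖x̃ₖ₊₁ − x̂(bₖ₊₁)‖ ≤ ε̄. If ℓ(x, b) := g(x) + r(b) satisfies ψ := ℓ(x̃ₖ₊₁, bₖ₊₁) + ‖∇ₓℓ(x̃ₖ₊₁, bₖ₊₁)‖ε̄ + (L_{∇g}/2)ε̄² − ℓ(x̃ₖ, bₖ) + ‖∇ₓℓ(x̃ₖ, bₖ)‖ε̄ + λαₖ‖zₖ‖² ≤ 0, then F(bₖ₊₁) − F(bₖ) ≤ −λαₖ‖zₖ‖². -/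

import Mathlib

/-!
Along the segment from `x` to `y`, the gap between `g` and the quadratic model
`g x + ⟪g' x, y - x⟫ + Lg / 2 * ‖y - x‖ ^ 2` is nonincreasing, which gives the descent lemma.
Applied at `x̃ₖ₊₁` with `‖x̂(bₖ₊₁) - x̃ₖ₊₁‖ ≤ ε̄` it bounds `F(bₖ₊₁) - r(bₖ₊₁)` from above; the gradient
inequality of convexity at `x̃ₖ` bounds `F(bₖ) - r(bₖ)` from below. Subtracting, `F(bₖ₊₁) - F(bₖ) ≤ ψ - λαₖ‖zₖ‖²`.
-/

open RealInnerProductSpace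

section LipschitzGradient

variable {X : Type*} [NormedAddCommGroup X] [InnerProductSpace ℝ X]
  {g : X → ℝ} {g' : X → X} {Lg : ℝ}

theorem hasDerivAt_comp_add_smul_of_gradient
    (hdiff : ∀ x, HasFDerivAt g (InnerProductSpace.toDualMap ℝ X (g' x)) x) (x v : X) (t : ℝ) :
    HasDerivAt (fun s : ℝ => g (x + s • v)) ⟪g' (x + t • v), v⟫ t := by
  have hline : HasDerivAt (fun s : ℝ => x + s • v) v t := by
    simpa using ((hasDerivAt_id t).smul_const v).const_add x
  exact (hdiff (x + t • v)).comp_hasDerivAt t hline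

theorem inner_gradient_add_smul_sub_le (hlip : ∀ x y, ‖g' x - g' y‖ ≤ Lg * ‖x - y‖)
    (x v : X) {t : ℝ} (ht : 0 ≤ t) :
    ⟪g' (x + t • v) - g' x, v⟫ ≤ Lg * t * ‖v‖ ^ 2 :=
  calc ⟪g' (x + t • v) - g' x, v⟫ ≤ ‖g' (x + t • v) - g' x‖ * ‖v‖ := real_inner_le_norm _ _
    _ ≤ Lg * ‖t • v‖ * ‖v‖ := by
        gcongr
        simpa using hlip (x + t • v) x
    _ = Lg * t * ‖v‖ ^ 2 := by rw [norm_smul, Real.norm_of_nonneg ht]; ring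

theorem le_add_inner_add_sq_of_lipschitz_gradient
    (hdiff : ∀ x, HasFDerivAt g (InnerProductSpace.toDualMap ℝ X (g' x)) x)
    (hlip : ∀ x y, ‖g' x - g' y‖ ≤ Lg * ‖x - y‖) (x y : X) :
    g y ≤ g x + ⟪g' x, y - x⟫ + Lg / 2 * ‖y - x‖ ^ 2 := by
  set v := y - x
  let φ : ℝ → ℝ := fun t => g (x + t • v) - t * ⟪g' x, v⟫ - Lg / 2 * t ^ 2 * ‖v‖ ^ 2
  let φ' : ℝ → ℝ := fun t => ⟪g' (x + t • v), v⟫ - ⟪g' x, v⟫ - Lg * t * ‖v‖ ^ 2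
  have hφ : ∀ t, HasDerivAt φ (φ' t) t := fun t => by
    have hquad := ((hasDerivAt_pow 2 t).const_mul (Lg / 2)).mul_const (‖v‖ ^ 2)
    refine (((hasDerivAt_comp_add_smul_of_gradient hdiff x v t).sub
      ((hasDerivAt_id' t).mul_const ⟪g' x, v⟫)).sub hquad).congr_deriv ?_
    simp only [φ']
    ring
  have hanti : AntitoneOn φ (Set.Icc 0 1) := by
    refine antitoneOn_of_hasDerivWithinAt_nonpos (convex_Icc 0 1)
      (fun t _ => (hφ t).continuousAt.continuousWithinAt)
      (fun t _ => (hφ t).hasDerivWithinAt) fun t ht => ?_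
    rw [interior_Icc] at ht
    have hslope := inner_gradient_add_smul_sub_le hlip x v ht.1.le
    simp only [φ', ← inner_sub_left]
    linarith
  have hφ_one_le := hanti (by norm_num) (by norm_num) zero_le_one
  simp only [φ, v, one_smul, add_sub_cancel, zero_smul, add_zero] at hφ_one_le
  linarith

theorem le_add_norm_mul_add_sq_of_lipschitz_gradient
    (hdiff : ∀ x, HasFDerivAt g (InnerProductSpace.toDualMap ℝ X (g' x)) x)
    (hlip : ∀ x y, ‖g' x - g' y‖ ≤ Lg * ‖x - y‖) (hLg : 0 ≤ Lg) {x y : X} {ε : ℝ}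
    (hxy : ‖x - y‖ ≤ ε) :
    g y ≤ g x + ‖g' x‖ * ε + Lg / 2 * ε ^ 2 := by
  rw [norm_sub_rev] at hxy
  have hinner : ⟪g' x, y - x⟫ ≤ ‖g' x‖ * ε :=
    (real_inner_le_norm _ _).trans (by gcongr)
  have hsq : Lg / 2 * ‖y - x‖ ^ 2 ≤ Lg / 2 * ε ^ 2 := by gcongr
  linarith [le_add_inner_add_sq_of_lipschitz_gradient hdiff hlip x y]

theorem sub_norm_mul_le_of_gradient_inequality
    (hconv : ∀ x y, g y ≥ g x + ⟪g' x, y - x⟫) {x y : X} {ε : ℝ} (hxy : ‖x - y‖ ≤ ε) :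
    g x - ‖g' x‖ * ε ≤ g y := by
  rw [norm_sub_rev] at hxy
  have hinner : -(‖g' x‖ * ε) ≤ ⟪g' x, y - x⟫ :=
    (neg_le_neg (by gcongr)).trans (neg_le_of_abs_le (abs_real_inner_le_norm _ _))
  linarith [hconv x y]

end LipschitzGradient

theorem maid_sufficient_decrease_general
    {X H : Type*} [NormedAddCommGroup X] [InnerProductSpace ℝ X]
    [NormedAddCommGroup H] [InnerProductSpace ℝ H]
    (g : X → ℝ) (g' : X → X) (Lg : ℝ) (hLg : 0 ≤ Lg)
    (hdiff : ∀ x, HasFDerivAt g (InnerProductSpace.toDualMap ℝ X (g' x)) x)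
    (hconv : ∀ x y, g y ≥ g x + ⟪g' x, y - x⟫)
    (hlip : ∀ x y, ‖g' x - g' y‖ ≤ Lg * ‖x - y‖)
    (r : H → ℝ) (xhat : H → X)
    (F : H → ℝ) (hF : ∀ b, F b = g (xhat b) + r b)
    (ℓ : X → H → ℝ) (hℓ : ∀ x b, ℓ x b = g x + r b)
    (bk bk1 : H) (xk xk1 : X) (εbar : ℝ)
    (hxk : ‖xk - xhat bk‖ ≤ εbar) (hxk1 : ‖xk1 - xhat bk1‖ ≤ εbar)
    (lam αk : ℝ) (zk : H)
    (hψ : ℓ xk1 bk1 + ‖g' xk1‖ * εbar + Lg / 2 * εbar ^ 2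
        - ℓ xk bk + ‖g' xk‖ * εbar + lam * αk * ‖zk‖ ^ 2 ≤ 0) :
    F bk1 - F bk ≤ -(lam * αk * ‖zk‖ ^ 2) := by
  have hupper := le_add_norm_mul_add_sq_of_lipschitz_gradient hdiff hlip hLg hxk1
  have hlower := sub_norm_mul_le_of_gradient_inequality hconv hxk
  rw [hF, hF]
  rw [hℓ, hℓ] at hψ
  linarith

theorem maid_sufficient_decrease
    {X H : Type*} [NormedAddCommGroup X] [InnerProductSpace ℝ X]
    [NormedAddCommGroup H] [InnerProductSpace ℝ H]
    (g : X → ℝ) (g' : X → X) (Lg : ℝ) (hLg : 0 ≤ Lg)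
    (hdiff : ∀ x, HasFDerivAt g (InnerProductSpace.toDualMap ℝ X (g' x)) x)
    (hconv : ∀ x y, g y ≥ g x + ⟪g' x, y - x⟫)
    (hlip : ∀ x y, ‖g' x - g' y‖ ≤ Lg * ‖x - y‖)
    (r : H → ℝ) (xhat : H → X)
    (F : H → ℝ) (hF : ∀ b, F b = g (xhat b) + r b)
    (ℓ : X → H → ℝ) (hℓ : ∀ x b, ℓ x b = g x + r b)
    (bk bk1 : H) (xk xk1 : X) (εbar : ℝ) (hεbar : 0 ≤ εbar)
    (hxk : ‖xk - xhat bk‖ ≤ εbar) (hxk1 : ‖xk1 - xhat bk1‖ ≤ εbar)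
    (lam αk : ℝ) (hlam : 0 < lam) (hαk : 0 < αk) (zk : H)
    (hψ : ℓ xk1 bk1 + ‖g' xk1‖ * εbar + Lg / 2 * εbar ^ 2
        - ℓ xk bk + ‖g' xk‖ * εbar + lam * αk * ‖zk‖ ^ 2 ≤ 0) :
    F bk1 - F bk ≤ -(lam * αk * ‖zk‖ ^ 2) :=
  maid_sufficient_decrease_general g g' Lg hLg hdiff hconv hlip r xhat F hF ℓ hℓ bk bk1 xk xk1 εbar
    hxk hxk1 lam αk zk hψ
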